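/- Let G be a connected graph of order n ≥ 4 with no dominating vertex and with no vertex u satisfying deg(u) = ecc(u) = 2, and let p ≤ n-3 be its number of pending vertices. Then ξ^c(G) ≥ 6n - 3p. -/
import Mathlib


open SimpleGraph Finset

/-- Degree of a vertex (classically decidable adjacency). -/
noncomputable def deg {V : Type*} (G : SimpleGraph V) [Fintype V] (v : V) : ℕ :=
  letI := Classical.decRel G.Adj; G.degree v

/-- Eccentricity of a vertex: maximum distance to any vertex. -/
noncomputable def ecc {V : Type*} (G : SimpleGraph V) [Fintype V] (v : V) : ℕ :=
  Finset.univ.sup (fun w => G.dist v w)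

/-- Eccentric connectivity index. -/
noncomputable def eci {V : Type*} (G : SimpleGraph V) [Fintype V] : ℕ :=
  ∑ v, deg G v * ecc G v

/-- Number of pending vertices (vertices of degree 1). -/
noncomputable def pendingCount {V : Type*} (G : SimpleGraph V) [Fintype V] : ℕ :=
  (Finset.univ.filter (fun v => deg G v = 1)).card

lemma deg_eq {V : Type*} (G : SimpleGraph V) [Fintype V] [DecidableRel G.Adj] (v : V) :
    deg G v = G.degree v := by
  unfold deg; congr!

lemma dist_le_ecc {V : Type*} (G : SimpleGraph V) [Fintype V] (v w : V) :
    G.dist v w ≤ ecc G v := Finset.le_sup (Finset.mem_univ w)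

-- if adjacent to everything else, degree = n - 1
lemma deg_of_adj_all {n : ℕ} (G : SimpleGraph (Fin n)) [DecidableRel G.Adj] (v : Fin n)
    (h : ∀ x, x ≠ v → G.Adj v x) : G.degree v = n - 1 := by
  have : G.neighborFinset v = Finset.univ.erase v := by
    ext x
    simp only [mem_neighborFinset, Finset.mem_erase, Finset.mem_univ, and_true]
    constructor
    · intro hx; exact fun he => G.ne_of_adj hx (he.symm)
    · intro hx; exact h x hx
  rw [SimpleGraph.degree, this, Finset.card_erase_of_mem (Finset.mem_univ v),
    Finset.card_univ, Fintype.card_fin]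

-- every vertex of connected graph on ≥2 vertices has positive degree
lemma deg_pos {n : ℕ} (G : SimpleGraph (Fin n)) [DecidableRel G.Adj] (hn : 2 ≤ n)
    (hc : G.Connected) (v : Fin n) : 0 < G.degree v := by
  haveI : Nontrivial (Fin n) := Fin.nontrivial_iff_two_le.mpr hn
  obtain ⟨w, hw⟩ := exists_ne v
  have hd : 0 < G.dist v w := hc.pos_dist_of_ne (Ne.symm hw)
  obtain ⟨p, hp⟩ := (hc v w).exists_walk_length_eq_dist
  cases p with
  | nil => simp [← hp] at hd
  | cons h q => exact (G.degree_pos_iff_exists_adj v).mpr ⟨_, h⟩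

-- eccentricity ≥ 2 for non-dominating vertices
lemma ecc_ge_two {n : ℕ} (G : SimpleGraph (Fin n)) [DecidableRel G.Adj] (hn : 2 ≤ n)
    (hc : G.Connected) (v : Fin n) (hdom : G.degree v ≠ n - 1) : 2 ≤ ecc G v := by
  by_contra hlt
  push_neg at hlt
  apply hdom
  apply deg_of_adj_all
  intro x hx
  have h1 : 0 < G.dist v x := hc.pos_dist_of_ne (Ne.symm hx)
  have h2 : G.dist v x ≤ 1 := by
    have := dist_le_ecc G v x; omega
  exact SimpleGraph.dist_eq_one_iff_adj.mp (by omega)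

-- pending vertices have eccentricity ≥ 3
lemma ecc_ge_three {n : ℕ} (G : SimpleGraph (Fin n)) [DecidableRel G.Adj] (hn : 4 ≤ n)
    (hc : G.Connected) (hdom : ∀ v : Fin n, G.degree v ≠ n - 1)
    (v : Fin n) (hv : G.degree v = 1) : 3 ≤ ecc G v := by
  by_contra hlt
  push_neg at hlt
  obtain ⟨w, hw⟩ := Finset.card_eq_one.mp (hv : (G.neighborFinset v).card = 1)
  have hadj : ∀ x, G.Adj v x ↔ x = w := by
    intro x
    rw [← SimpleGraph.mem_neighborFinset, hw, Finset.mem_singleton]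
  apply hdom w
  apply deg_of_adj_all
  intro x hx
  rcases eq_or_ne x v with rfl | hxv
  · exact ((hadj w).mpr rfl).symm
  · have h1 : 0 < G.dist v x := hc.pos_dist_of_ne (Ne.symm hxv)
    have h2 : G.dist v x ≤ 2 := by
      have := dist_le_ecc G v x; omega
    obtain ⟨q, hq⟩ := (hc v x).exists_walk_length_eq_dist
    interval_cases h : G.dist v x
    · exact absurd (((hadj x).mp (SimpleGraph.dist_eq_one_iff_adj.mp h)).symm ▸ hx) (by simp)
    · -- dist = 2, walk v - y - x with y = w
      cases q with
      | nil => simp at hq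
      | cons ha q' =>
        cases q' with
        | nil => simp at hq
        | cons hb q'' =>
          cases q'' with
          | nil =>
            have : _ = w := (hadj _).mp ha
            rwa [this] at hb
          | cons hc' q''' => simp at hq

theorem stmt9 (n p : ℕ) (hn : 4 ≤ n) (G : SimpleGraph (Fin n)) (hc : G.Connected)
    (hdom : ∀ v : Fin n, deg G v ≠ n - 1)
    (hu : ∀ u : Fin n, ¬(deg G u = 2 ∧ ecc G u = 2))
    (hp : pendingCount G = p) (hpn : p ≤ n - 3) :
    6 * n - 3 * p ≤ eci G := by
  classical
  simp only [deg_eq] at hdom hu hp ⊢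
  have key : ∀ v : Fin n, (if G.degree v = 1 then 3 else 6) ≤ deg G v * ecc G v := by
    intro v
    rw [deg_eq]
    by_cases h1 : G.degree v = 1
    · simp only [h1, if_pos, one_mul]
      exact ecc_ge_three G hn hc hdom v h1
    · rw [if_neg h1]
      have hd2 : 2 ≤ G.degree v := by
        have := deg_pos G (by omega) hc v; omega
      have he2 : 2 ≤ ecc G v := ecc_ge_two G (by omega) hc v (hdom v)
      by_cases h2 : G.degree v = 2
      · have he3 : 3 ≤ ecc G v := by
          have := hu v
          rcases Nat.lt_or_ge (ecc G v) 3 with h | h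
          · exact absurd ⟨h2, by omega⟩ this
          · exact h
        calc 6 = 2 * 3 := rfl
          _ ≤ G.degree v * ecc G v := Nat.mul_le_mul h2.ge he3
      · calc 6 = 3 * 2 := rfl
          _ ≤ G.degree v * ecc G v := Nat.mul_le_mul (by omega) he2
  have hsum : ∑ v : Fin n, (if G.degree v = 1 then 3 else 6) ≤ eci G :=
    Finset.sum_le_sum fun v _ => key v
  rw [Finset.sum_ite] at hsum
  simp only [Finset.sum_const, smul_eq_mul] at hsum
  have hcard : (Finset.univ.filter (fun v => G.degree v = 1)).card = p := by
    rw [← hp]; unfold pendingCount; simp only [deg_eq]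
  have hcards : (Finset.univ.filter (fun v => G.degree v = 1)).card
      + (Finset.univ.filter (fun v => ¬G.degree v = 1)).card = n := by
    rw [Finset.card_filter_add_card_filter_not, Finset.card_univ, Fintype.card_fin]
  rw [hcard] at hsum hcards
  have hpn' : p ≤ n := by omega
  omega
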